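/- Let $\mathcal{D}$ be a bounded sequence of integers $(d_k)_{k\ge 1}$ with every $d_k \ge 2$, let $0 < i < 1$, and let $c > 0$. If $q_1, q_2 \in \mathbb{N}$ both satisfy $|q_s|_{\mathcal{D}} \le (c/q_s)^i$ for $s = 1,2$, then $\gcd(q_1, q_2) \ge c^{-i} \min(q_1, q_2)^i$. -/

import Mathlib

/-!
For `q > 0` the infimum defining `|q|_𝒟` runs over reciprocals of divisors of `q`, a finite
set, so it is attained: `|q|_𝒟 = 1 / D_n` with `D_n ∣ q`, and the hypothesis on `q` says `D_n ≥ c^{-i} q^i`.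
The `D_n` form a divisibility chain, so the smaller of the two divisors obtained for `q₁` and
`q₂` divides both, hence divides `gcd(q₁, q₂)`.
-/

/-- `Dprod d n = d 0 * d 1 * ... * d (n-1)`, i.e. the product of the first `n`
terms of the sequence `d` (so `Dprod d 0 = 1`). -/
def Dprod (d : ℕ → ℕ) (n : ℕ) : ℕ := ∏ k ∈ Finset.range n, d k

/-- The `𝒟`-adic pseudo absolute value `|q|_𝒟 = inf {1 / D_n : q ∈ D_n ℤ}`. -/
noncomputable def pseudoAbs (d : ℕ → ℕ) (q : ℕ) : ℝ :=
  sInf {x : ℝ | ∃ n : ℕ, Dprod d n ∣ q ∧ x = 1 / (Dprod d n : ℝ)}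

/-- Distance from a real number to its nearest integer. -/
noncomputable def distNearestInt (x : ℝ) : ℝ := |x - round x|

/-- The set of mixed `(i,j)`-badly approximable numbers `Bad_𝒟(i,j)`. -/
def BadD (d : ℕ → ℕ) (i j : ℝ) : Set ℝ :=
  {x : ℝ | ∃ c : ℝ, 0 < c ∧ ∀ q : ℕ, 0 < q →
    max (pseudoAbs d q ^ (1 / i)) (distNearestInt ((q : ℝ) * x) ^ (1 / j)) > c / (q : ℝ)}

theorem Dprod_dvd_Dprod (d : ℕ → ℕ) {m n : ℕ} (h : m ≤ n) : Dprod d m ∣ Dprod d n :=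
  Finset.prod_dvd_prod_of_subset _ _ _ (Finset.range_subset_range.mpr h)

theorem exists_Dprod_dvd_and_pseudoAbs_eq (d : ℕ → ℕ) {q : ℕ} (hq : 0 < q) :
    ∃ n, Dprod d n ∣ q ∧ pseudoAbs d q = 1 / (Dprod d n : ℝ) := by
  set S : Set ℝ := {x | ∃ n : ℕ, Dprod d n ∣ q ∧ x = 1 / (Dprod d n : ℝ)}
  have hS_finite : S.Finite := by
    refine ((q.divisors.finite_toSet).image fun m : ℕ => 1 / (m : ℝ)).subset ?_
    rintro x ⟨n, hdvd, rfl⟩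
    exact ⟨Dprod d n, Nat.mem_divisors.mpr ⟨hdvd, hq.ne'⟩, rfl⟩
  have hS_nonempty : S.Nonempty := ⟨1, 0, by simp [Dprod]⟩
  exact hS_nonempty.csInf_mem hS_finite

theorem exists_Dprod_dvd_and_rpow_le_Dprod (d : ℕ → ℕ) {q : ℕ} (hq : 0 < q) {i c : ℝ}
    (hc : 0 < c) (h : pseudoAbs d q ≤ (c / (q : ℝ)) ^ i) :
    ∃ n, Dprod d n ∣ q ∧ c ^ (-i) * (q : ℝ) ^ i ≤ Dprod d n := by
  obtain ⟨n, hdvd, heq⟩ := exists_Dprod_dvd_and_pseudoAbs_eq d hq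
  have hD : (0 : ℝ) < Dprod d n := by exact_mod_cast Nat.pos_of_dvd_of_pos hdvd hq
  have hq' : (0 : ℝ) < q := by exact_mod_cast hq
  have hinv : c ^ (-i) * (q : ℝ) ^ i = ((c / q) ^ i)⁻¹ := by
    rw [Real.div_rpow hc.le hq'.le, inv_div, Real.rpow_neg hc.le, div_eq_mul_inv, mul_comm]
  refine ⟨n, hdvd, ?_⟩
  rw [hinv, inv_le_comm₀ (by positivity) hD, ← one_div, ← heq]
  exact h

theorem rpow_min_le_gcd_of_Dprod_dvd {d : ℕ → ℕ} {q₁ q₂ n₁ n₂ : ℕ} {i c : ℝ} (hi : 0 ≤ i)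
    (hc : 0 < c) (hq₁ : 0 < q₁) (hn : n₁ ≤ n₂) (h₁ : Dprod d n₁ ∣ q₁)
    (hle₁ : c ^ (-i) * (q₁ : ℝ) ^ i ≤ Dprod d n₁) (h₂ : Dprod d n₂ ∣ q₂) :
    c ^ (-i) * ((min q₁ q₂ : ℕ) : ℝ) ^ i ≤ Nat.gcd q₁ q₂ := by
  have hgcd : Dprod d n₁ ∣ Nat.gcd q₁ q₂ := Nat.dvd_gcd h₁ ((Dprod_dvd_Dprod d hn).trans h₂)
  calc c ^ (-i) * ((min q₁ q₂ : ℕ) : ℝ) ^ i ≤ c ^ (-i) * (q₁ : ℝ) ^ i := by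
        gcongr
        exact_mod_cast min_le_left q₁ q₂
    _ ≤ Dprod d n₁ := hle₁
    _ ≤ Nat.gcd q₁ q₂ := by exact_mod_cast Nat.le_of_dvd (Nat.gcd_pos_of_pos_left _ hq₁) hgcd

theorem gcd_ge_of_pseudoAbs_le_general (d : ℕ → ℕ)
    (i c : ℝ) (hi : 0 < i) (hc : 0 < c)
    (q₁ q₂ : ℕ) (hq₁ : 0 < q₁) (hq₂ : 0 < q₂)
    (hC₁ : pseudoAbs d q₁ ≤ (c / (q₁ : ℝ)) ^ i) (hC₂ : pseudoAbs d q₂ ≤ (c / (q₂ : ℝ)) ^ i) :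
    (Nat.gcd q₁ q₂ : ℝ) ≥ c ^ (-i) * ((min q₁ q₂ : ℕ) : ℝ) ^ i := by
  obtain ⟨n₁, h₁, hle₁⟩ := exists_Dprod_dvd_and_rpow_le_Dprod d hq₁ hc hC₁
  obtain ⟨n₂, h₂, hle₂⟩ := exists_Dprod_dvd_and_rpow_le_Dprod d hq₂ hc hC₂
  rcases le_total n₁ n₂ with hn | hn
  · exact rpow_min_le_gcd_of_Dprod_dvd hi.le hc hq₁ hn h₁ hle₁ h₂
  · rw [Nat.gcd_comm, min_comm]
    exact rpow_min_le_gcd_of_Dprod_dvd hi.le hc hq₂ hn h₂ hle₂ h₁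

/-- If `q₁, q₂` both satisfy `|q_s|_𝒟 ≤ (c/q_s)^i`, then
`gcd(q₁, q₂) ≥ c^{-i} (min q₁ q₂)^i`. -/
theorem gcd_ge_of_pseudoAbs_le (d : ℕ → ℕ) (hd2 : ∀ k, 2 ≤ d k)
    (hdbdd : ∃ M, ∀ k, d k ≤ M) (i c : ℝ) (hi : 0 < i) (hi' : i < 1) (hc : 0 < c)
    (q₁ q₂ : ℕ) (hq₁ : 0 < q₁) (hq₂ : 0 < q₂)
    (hC₁ : pseudoAbs d q₁ ≤ (c / (q₁ : ℝ)) ^ i) (hC₂ : pseudoAbs d q₂ ≤ (c / (q₂ : ℝ)) ^ i) :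
    (Nat.gcd q₁ q₂ : ℝ) ≥ c ^ (-i) * ((min q₁ q₂ : ℕ) : ℝ) ^ i :=
  gcd_ge_of_pseudoAbs_le_general d i c hi hc q₁ q₂ hq₁ hq₂ hC₁ hC₂
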